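/- Let n ≥ 1 and let f and g be continuous probability densities on ℝ that are strictly positive on a common support, with cdfs F and G, F strictly increasing with inverse F^{-1}, and suppose all integrals below exist and are finite. Then the KL information between a perfect RSS from f and a perfect RSS from g decomposes as Σ_{i=1}^n K(f_(i), g_(i)) = n·K(f,g) + A_n(F,G), where A_n(F,G) = −n·(n-1)/2 − n·(n-1)·∫_0^1 [ u·log G(F^{-1}(u)) + (1-u)·log(1 − G(F^{-1}(u))) ] du. -/

import Mathlib

open MeasureTheory Real

/-- Cumulative distribution function of a density `f`. -/
noncomputable def cdfOf (f : ℝ → ℝ) (x : ℝ) : ℝ := ∫ t in Set.Iic x, f t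

/-- Density of the `i`-th order statistic from a sample of size `n` with parent density `f`. -/
noncomputable def osDen (f : ℝ → ℝ) (n i : ℕ) (x : ℝ) : ℝ :=
  (i : ℝ) * (n.choose i : ℝ) * (cdfOf f x) ^ (i - 1) * (1 - cdfOf f x) ^ (n - i) * f x

/-- Kullback–Leibler divergence between densities `p` and `q`. -/
noncomputable def KL (p q : ℝ → ℝ) : ℝ := ∫ x, p x * Real.log (p x / q x)

/-!
Write `f_(i) = w_i(F) · f` with `w_i(p) = i·C(n,i)·p^(i-1)·(1-p)^(n-i)`. On the support,
`log (f_(i) / g_(i)) = log (f / g) + (i-1)·log (F / G) + (n-i)·log ((1-F) / (1-G))`, and since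
`w_i(p)` is `n` times the Binomial`(n-1, p)` probability of `i-1`, we have `Σ w_i = n` and
`Σ (i-1)·w_i = n(n-1)·p`. Summing over `i` therefore collapses the integrands to
`n·f·log (f / g) + n(n-1)·f·[F log F + (1-F) log (1-F) - F log G - (1-F) log (1-G)]`,
and the substitution `u = F(x)` turns the bracket into
`∫₀¹ (u log u + (1-u) log (1-u)) du = -1/2` minus the integral in `A_n(F,G)`.
-/

section BinomialWeights

open Finset Polynomial

-- `osDen f n i x = osWeight n i (cdfOf f x) * f x` holds by `rfl`.
noncomputable def osWeight (n i : ℕ) (p : ℝ) : ℝ :=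
  i * n.choose i * p ^ (i - 1) * (1 - p) ^ (n - i)

theorem osWeight_succ_succ (m j : ℕ) (p : ℝ) :
    osWeight (m + 1) (j + 1) p = (m + 1) * (bernsteinPolynomial ℝ m j).eval p := by
  have h := congrArg (Nat.cast (R := ℝ)) (Nat.add_one_mul_choose_eq m j)
  push_cast at h
  simp only [osWeight, bernsteinPolynomial, eval_mul, eval_pow, eval_sub, eval_one, eval_X,
    eval_natCast, Nat.add_sub_add_right, Nat.add_sub_cancel]
  push_cast
  linear_combination (p ^ j * (1 - p) ^ (m - j)) * h.symm

theorem sum_osWeight_mul (n : ℕ) (p α β γ : ℝ) :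
    ∑ i ∈ Icc 1 n, osWeight n i p * (α + β * (i - 1) + γ * (n - i))
      = n * α + n * (n - 1) * (β * p + γ * (1 - p)) := by
  rcases n with _ | m
  · simp
  have hsum := congrArg (eval p) (bernsteinPolynomial.sum ℝ m)
  have hmean := congrArg (eval p) (bernsteinPolynomial.sum_smul ℝ m)
  simp only [eval_finsetSum, nsmul_eq_mul, eval_mul, eval_natCast, eval_X, eval_one] at hsum hmean
  rw [← Ico_add_one_right_eq_Icc, sum_Ico_eq_sum_range, Nat.add_sub_cancel]
  simp only [add_comm 1, osWeight_succ_succ]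
  push_cast
  calc ∑ j ∈ range (m + 1), (m + 1) * (bernsteinPolynomial ℝ m j).eval p
          * (α + β * (j + 1 - 1) + γ * (m + 1 - (j + 1)))
      = (m + 1) * ((α + γ * m) * ∑ j ∈ range (m + 1), (bernsteinPolynomial ℝ m j).eval p
          + (β - γ) * ∑ j ∈ range (m + 1), j * (bernsteinPolynomial ℝ m j).eval p) := by
        rw [mul_sum, mul_sum, ← sum_add_distrib, mul_sum]
        exact sum_congr rfl fun j _ => by ring
    _ = _ := by rw [hsum, hmean]; ring

theorem osWeight_mul_div_osWeight_mul {n i : ℕ} (hi : i ∈ Icc 1 n) {p q : ℝ}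
    (hq : q ∈ Set.Ioo 0 1) (a b : ℝ) : osWeight n i p * a / (osWeight n i q * b)
      = (p / q) ^ (i - 1) * ((1 - p) / (1 - q)) ^ (n - i) * (a / b) := by
  obtain ⟨hi1, hin⟩ := mem_Icc.1 hi
  have hc : (n.choose i : ℝ) ≠ 0 := by exact_mod_cast (Nat.choose_pos hin).ne'
  have hq0 : q ≠ 0 := hq.1.ne'
  have hq1 : 1 - q ≠ 0 := (sub_pos.2 hq.2).ne'
  simp only [osWeight, div_pow]
  field_simp

theorem log_osWeight_mul_div_osWeight_mul {n i : ℕ} (hi : i ∈ Icc 1 n) {p q a b : ℝ}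
    (hp : p ∈ Set.Ioo 0 1) (hq : q ∈ Set.Ioo 0 1) (ha : 0 < a) (hb : 0 < b) :
    log (osWeight n i p * a / (osWeight n i q * b))
      = log (a / b) + (i - 1) * log (p / q) + (n - i) * log ((1 - p) / (1 - q)) := by
  obtain ⟨hi1, hin⟩ := mem_Icc.1 hi
  have hpq : 0 < p / q := div_pos hp.1 hq.1
  have hpq' : 0 < (1 - p) / (1 - q) := div_pos (sub_pos.2 hp.2) (sub_pos.2 hq.2)
  rw [osWeight_mul_div_osWeight_mul hi hq, log_mul (by positivity) (div_pos ha hb).ne',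
    log_mul (by positivity) (by positivity), log_pow, log_pow, Nat.cast_sub hi1, Nat.cast_sub hin]
  push_cast
  ring

noncomputable def binaryCrossLog (p q : ℝ) : ℝ := p * log q + (1 - p) * log (1 - q)

theorem sum_osWeight_mul_log_div {n : ℕ} {p q a b : ℝ} (hp : p ∈ Set.Ioo 0 1)
    (hq : q ∈ Set.Ioo 0 1) (ha : 0 < a) (hb : 0 < b) :
    ∑ i ∈ Icc 1 n, osWeight n i p * a * log (osWeight n i p * a / (osWeight n i q * b))
      = n * (a * log (a / b)) + n * (n - 1) * (a * (binaryCrossLog p p - binaryCrossLog p q)) := by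
  have hp1 : 0 < 1 - p := sub_pos.2 hp.2
  have hq1 : 0 < 1 - q := sub_pos.2 hq.2
  have hterm : ∀ i ∈ Icc 1 n,
      osWeight n i p * a * log (osWeight n i p * a / (osWeight n i q * b))
        = osWeight n i p * (a * log (a / b) + a * log (p / q) * (i - 1)
            + a * log ((1 - p) / (1 - q)) * (n - i)) := fun i hi => by
    rw [mul_assoc, log_osWeight_mul_div_osWeight_mul hi hp hq ha hb]
    ring
  rw [sum_congr rfl hterm, sum_osWeight_mul, binaryCrossLog, binaryCrossLog,
    log_div hp.1.ne' hq.1.ne', log_div hp1.ne' hq1.ne']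
  ring

end BinomialWeights

open Set Filter Topology

section cdfOf

variable {f : ℝ → ℝ}

theorem cdfOf_hasDerivAt (hf : Continuous f) (hfi : Integrable f) (x : ℝ) :
    HasDerivAt (cdfOf f) (f x) x := by
  have hF : cdfOf f = fun y => cdfOf f 0 + ∫ t in (0:ℝ)..y, f t := by
    ext y
    rw [← intervalIntegral.integral_Iic_sub_Iic hfi.integrableOn hfi.integrableOn, cdfOf, cdfOf]
    ring
  rw [hF]
  exact (intervalIntegral.integral_hasDerivAt_right hfi.intervalIntegrable
    hfi.aestronglyMeasurable.stronglyMeasurableAtFilter hf.continuousAt).const_add _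

theorem cdfOf_continuous (hf : Continuous f) (hfi : Integrable f) : Continuous (cdfOf f) :=
  continuous_iff_continuousAt.2 fun x => (cdfOf_hasDerivAt hf hfi x).continuousAt

theorem cdfOf_nonneg (hf0 : ∀ x, 0 ≤ f x) (x : ℝ) : 0 ≤ cdfOf f x :=
  setIntegral_nonneg measurableSet_Iic fun t _ => hf0 t

theorem cdfOf_le_one (hf0 : ∀ x, 0 ≤ f x) (hf1 : ∫ x, f x = 1) (x : ℝ) : cdfOf f x ≤ 1 :=
  hf1 ▸ setIntegral_le_integral (.of_integral_ne_zero (by simp [hf1])) (ae_of_all _ hf0)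

theorem cdfOf_pos (hfi : Integrable f) (hf0 : ∀ x, 0 ≤ f x) {x : ℝ}
    (hx : ∀ᶠ y in 𝓝 x, 0 < f y) : 0 < cdfOf f x := by
  obtain ⟨l, hl, hsub⟩ := exists_Ioc_subset_of_mem_nhds hx (exists_lt x)
  refine (setIntegral_pos_iff_support_of_nonneg_ae (ae_of_all _ hf0) hfi.integrableOn).2 ?_
  calc 0 < volume (Ioc l x) := by simp [hl]
    _ ≤ _ := measure_mono fun y hy => mem_inter (Function.mem_support.2 (hsub hy).ne') hy.2

theorem cdfOf_lt_one (hf0 : ∀ x, 0 ≤ f x) (hf1 : ∫ x, f x = 1) {x : ℝ}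
    (hx : ∀ᶠ y in 𝓝 x, 0 < f y) : cdfOf f x < 1 := by
  have hfi : Integrable f := .of_integral_ne_zero (by simp [hf1])
  obtain ⟨u, hu, hsub⟩ := exists_Ico_subset_of_mem_nhds hx (exists_gt x)
  have htail : 0 < ∫ t in Ioi x, f t := by
    refine (setIntegral_pos_iff_support_of_nonneg_ae (ae_of_all _ hf0) hfi.integrableOn).2 ?_
    calc 0 < volume (Ioo x u) := by simp [hu]
      _ ≤ _ := measure_mono fun y hy =>
        mem_inter (Function.mem_support.2 (hsub (Ioo_subset_Ico_self hy)).ne') hy.1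
  have hsplit := intervalIntegral.integral_Iic_add_Ioi (b := x) hfi.integrableOn hfi.integrableOn
  rw [hf1] at hsplit
  rw [cdfOf]
  linarith

theorem cdfOf_mem_Ioo (hf0 : ∀ x, 0 ≤ f x) (hf1 : ∫ x, f x = 1)
    (hf : IsOpen (Function.support f)) {x : ℝ} (hx : x ∈ Function.support f) :
    cdfOf f x ∈ Ioo 0 1 := by
  have hpos : ∀ᶠ y in 𝓝 x, 0 < f y :=
    Filter.mem_of_superset (hf.mem_nhds hx) fun y hy => (hf0 y).lt_of_ne' hy
  exact ⟨cdfOf_pos (.of_integral_ne_zero (by simp [hf1])) hf0 hpos, cdfOf_lt_one hf0 hf1 hpos⟩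

theorem setIntegral_image_cdfOf (hf : Continuous f) (hfi : Integrable f) (hf0 : ∀ x, 0 ≤ f x)
    {S : Set ℝ} (hS : MeasurableSet S) (hinj : InjOn (cdfOf f) S) (h : ℝ → ℝ) :
    ∫ u in cdfOf f '' S, h u = ∫ x in S, f x * h (cdfOf f x) := by
  rw [integral_image_eq_integral_abs_deriv_smul hS
    (fun x _ => (cdfOf_hasDerivAt hf hfi x).hasDerivWithinAt) hinj]
  simp_rw [abs_of_nonneg (hf0 _), smul_eq_mul]

theorem integral_Ioo_zero_one_eq_integral_mul_cdfOf (hf : Continuous f) (hf0 : ∀ x, 0 ≤ f x)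
    (hf1 : ∫ x, f x = 1) (hinj : InjOn (cdfOf f) (Function.support f))
    (himg : cdfOf f '' Function.support f = Ioo 0 1) (h : ℝ → ℝ) :
    ∫ u in Ioo 0 1, h u = ∫ x, f x * h (cdfOf f x) := by
  rw [← himg, setIntegral_image_cdfOf hf (.of_integral_ne_zero (by simp [hf1])) hf0
    hf.isOpen_support.measurableSet hinj, setIntegral_eq_integral_of_forall_compl_eq_zero]
  intro x hx
  simp [Function.notMem_support.1 hx]

end cdfOf

theorem integral_mul_log_zero_one : ∫ u in (0:ℝ)..1, u * log u = -1 / 4 := by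
  have hcont : ContinuousOn (fun u : ℝ => u / 2 * (u * log u) - u ^ 2 / 4) (Icc 0 1) := by
    fun_prop
  have hderiv : ∀ u ∈ Ioo (0:ℝ) 1,
      HasDerivAt (fun u : ℝ => u / 2 * (u * log u) - u ^ 2 / 4) (u * log u) u := by
    intro u hu
    exact ((((hasDerivAt_id' u).div_const 2).mul (hasDerivAt_mul_log hu.1.ne')).sub
      ((hasDerivAt_pow 2 u).div_const 4)).congr_deriv (by push_cast; ring)
  rw [intervalIntegral.integral_eq_sub_of_hasDerivAt_of_le zero_le_one hcont hderiv
    (continuous_mul_log.intervalIntegrable 0 1)]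
  norm_num

theorem integral_binaryCrossLog_self : ∫ u in Ioo (0:ℝ) 1, binaryCrossLog u u = -1 / 2 := by
  rw [← integral_Ioc_eq_integral_Ioo, ← intervalIntegral.integral_of_le zero_le_one]
  have hint : IntervalIntegrable (fun u : ℝ => u * log u) volume 0 1 :=
    continuous_mul_log.intervalIntegrable _ _
  have hint' : IntervalIntegrable (fun u : ℝ => (1 - u) * log (1 - u)) volume 0 1 :=
    (continuous_mul_log.comp (continuous_const.sub continuous_id)).intervalIntegrable _ _
  simp only [binaryCrossLog]
  rw [intervalIntegral.integral_add hint hint',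
    intervalIntegral.integral_comp_sub_left (fun u => u * log u), sub_self, sub_zero,
    integral_mul_log_zero_one]
  norm_num

theorem continuous_binaryCrossLog_self : Continuous fun p => binaryCrossLog p p :=
  continuous_mul_log.add (continuous_mul_log.comp (continuous_const.sub continuous_id))

theorem integrable_mul_binaryCrossLog_cdfOf_self {f : ℝ → ℝ} (hf : Continuous f)
    (hf0 : ∀ x, 0 ≤ f x) (hf1 : ∫ x, f x = 1) :
    Integrable fun x => f x * binaryCrossLog (cdfOf f x) (cdfOf f x) := by
  have hfi : Integrable f := .of_integral_ne_zero (by simp [hf1])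
  obtain ⟨C, hC⟩ := isCompact_Icc.exists_bound_of_continuousOn
    (continuous_binaryCrossLog_self.continuousOn (s := Icc 0 1))
  exact hfi.mul_bdd
    (continuous_binaryCrossLog_self.comp (cdfOf_continuous hf hfi)).aestronglyMeasurable
    (ae_of_all _ fun x => hC _ ⟨cdfOf_nonneg hf0 x, cdfOf_le_one hf0 hf1 x⟩)

theorem sum_KL_osDen_eq (n : ℕ) {f g : ℝ → ℝ} (hf : Continuous f) (hf0 : ∀ x, 0 ≤ f x)
    (hf1 : ∫ x, f x = 1)
    (hpos : ∀ x, f x ≠ 0 → 0 < g x ∧ cdfOf f x ∈ Ioo 0 1 ∧ cdfOf g x ∈ Ioo 0 1)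
    (hfg : Integrable fun x => f x * log (f x / g x))
    (hfgi : ∀ i ∈ Finset.Icc 1 n,
      Integrable fun x => osDen f n i x * log (osDen f n i x / osDen g n i x)) :
    ∑ i ∈ Finset.Icc 1 n, KL (osDen f n i) (osDen g n i)
      = n * KL f g + n * (n - 1) * ((∫ x, f x * binaryCrossLog (cdfOf f x) (cdfOf f x))
          - ∫ x, f x * binaryCrossLog (cdfOf f x) (cdfOf g x)) := by
  set c : ℝ := n * (n - 1)
  set D : ℝ → ℝ := fun x =>
    f x * (binaryCrossLog (cdfOf f x) (cdfOf f x) - binaryCrossLog (cdfOf f x) (cdfOf g x))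
  have hpointwise : (fun x => ∑ i ∈ Finset.Icc 1 n,
      osDen f n i x * log (osDen f n i x / osDen g n i x))
        = fun x => n * (f x * log (f x / g x)) + c * D x := by
    ext x
    by_cases hx : f x = 0
    · simp [D, osDen, hx]
    · obtain ⟨hg, hF, hG⟩ := hpos x hx
      exact sum_osWeight_mul_log_div hF hG ((hf0 x).lt_of_ne' hx) hg
  have hcD : Integrable fun x => c * D x :=
    ((integrable_finsetSum _ hfgi).sub (hfg.const_mul n)).congr (ae_of_all _ fun x => by
      simp only [Pi.sub_apply, congrFun hpointwise x]
      ring)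
  simp only [KL]
  rw [← integral_finsetSum _ hfgi, hpointwise, integral_add (hfg.const_mul _) hcD,
    integral_const_mul, integral_const_mul c]
  rcases eq_or_ne c 0 with hc | hc
  · simp [hc]
  have hB := integrable_mul_binaryCrossLog_cdfOf_self hf hf0 hf1
  have hD : Integrable D :=
    (hcD.const_mul c⁻¹).congr (ae_of_all _ fun x => inv_mul_cancel_left₀ hc (D x))
  have hC : Integrable fun x => f x * binaryCrossLog (cdfOf f x) (cdfOf g x) :=
    (hB.sub hD).congr (ae_of_all _ fun x => by simp only [Pi.sub_apply, D]; ring)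
  simp only [D, mul_sub]
  rw [integral_sub hB hC]
  ring

theorem KL_RSS_RSS_decomposition_general (n : ℕ) (f g : ℝ → ℝ) (S : Set ℝ)
    (hf_cont : Continuous f) (hf_nonneg : ∀ x, 0 ≤ f x) (hf_int : ∫ x, f x = 1)
    (hg_nonneg : ∀ x, 0 ≤ g x) (hg_int : ∫ x, g x = 1)
    (hfS : Function.support f = S) (hgS : Function.support g = S)
    (hF_mono : StrictMonoOn (cdfOf f) S)
    (Finv : ℝ → ℝ)
    (hFinv_mem : ∀ u ∈ Set.Ioo (0:ℝ) 1, Finv u ∈ S)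
    (hFinv : ∀ u ∈ Set.Ioo (0:ℝ) 1, cdfOf f (Finv u) = u)
    (hfg : Integrable (fun x => f x * Real.log (f x / g x)))
    (hfgi : ∀ i ∈ Finset.Icc 1 n,
      Integrable (fun x => osDen f n i x * Real.log (osDen f n i x / osDen g n i x))) :
    (∑ i ∈ Finset.Icc 1 n, KL (osDen f n i) (osDen g n i))
      = (n : ℝ) * KL f g
        + (-((n : ℝ) * ((n : ℝ) - 1)) / 2
            - (n : ℝ) * ((n : ℝ) - 1) *
              ∫ u in Set.Ioo (0:ℝ) 1,
                (u * Real.log (cdfOf g (Finv u))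
                  + (1 - u) * Real.log (1 - cdfOf g (Finv u)))) := by
  subst hfS
  have hF : ∀ x ∈ Function.support f, cdfOf f x ∈ Ioo 0 1 := fun x hx =>
    cdfOf_mem_Ioo hf_nonneg hf_int hf_cont.isOpen_support hx
  have hFinv_cdfOf : ∀ x ∈ Function.support f, Finv (cdfOf f x) = x := fun x hx =>
    hF_mono.injOn (hFinv_mem _ (hF x hx)) hx (hFinv _ (hF x hx))
  have hsubst := integral_Ioo_zero_one_eq_integral_mul_cdfOf hf_cont hf_nonneg hf_int
    hF_mono.injOn (Subset.antisymm (image_subset_iff.2 fun x hx => hF x hx)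
      fun u hu => ⟨Finv u, hFinv_mem u hu, hFinv u hu⟩)
  have hentropy : ∫ x, f x * binaryCrossLog (cdfOf f x) (cdfOf f x) = -1 / 2 :=
    (hsubst fun u => binaryCrossLog u u).symm.trans integral_binaryCrossLog_self
  have hcross : ∫ x, f x * binaryCrossLog (cdfOf f x) (cdfOf g x)
      = ∫ u in Ioo 0 1, binaryCrossLog u (cdfOf g (Finv u)) := by
    rw [hsubst fun u => binaryCrossLog u (cdfOf g (Finv u))]
    refine integral_congr_ae (ae_of_all _ fun x => ?_)
    by_cases hx : x ∈ Function.support f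
    · simp only [hFinv_cdfOf x hx]
    · simp [Function.notMem_support.1 hx]
  have hpos : ∀ x, f x ≠ 0 → 0 < g x ∧ cdfOf f x ∈ Ioo 0 1 ∧ cdfOf g x ∈ Ioo 0 1 :=
    fun x hx => by
      have hxg : x ∈ Function.support g := hgS ▸ hx
      exact ⟨(hg_nonneg x).lt_of_ne' hxg, hF x hx,
        cdfOf_mem_Ioo hg_nonneg hg_int (hgS ▸ hf_cont.isOpen_support) hxg⟩
  rw [sum_KL_osDen_eq n hf_cont hf_nonneg hf_int hpos hfg hfgi, hentropy, hcross]
  simp only [binaryCrossLog]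
  ring

/-- The KL information between a perfect RSS from `f` and a perfect RSS from `g` decomposes
as `Σ_{i=1}^n K(f_(i), g_(i)) = n·K(f,g) + A_n(F,G)`, where
`A_n(F,G) = −n(n-1)/2 − n(n-1)·∫_0^1 [u·log G(F⁻¹(u)) + (1-u)·log(1 − G(F⁻¹(u)))] du`. -/
theorem KL_RSS_RSS_decomposition (n : ℕ) (hn : 1 ≤ n) (f g : ℝ → ℝ) (S : Set ℝ)
    (hf_cont : Continuous f) (hf_nonneg : ∀ x, 0 ≤ f x) (hf_int : ∫ x, f x = 1)
    (hg_cont : Continuous g) (hg_nonneg : ∀ x, 0 ≤ g x) (hg_int : ∫ x, g x = 1)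
    (hfS : Function.support f = S) (hgS : Function.support g = S)
    (hF_mono : StrictMonoOn (cdfOf f) S)
    (Finv : ℝ → ℝ)
    (hFinv_mem : ∀ u ∈ Set.Ioo (0:ℝ) 1, Finv u ∈ S)
    (hFinv : ∀ u ∈ Set.Ioo (0:ℝ) 1, cdfOf f (Finv u) = u)
    (hfg : Integrable (fun x => f x * Real.log (f x / g x)))
    (hfgi : ∀ i ∈ Finset.Icc 1 n,
      Integrable (fun x => osDen f n i x * Real.log (osDen f n i x / osDen g n i x)))
    (hA : IntegrableOn
      (fun u => u * Real.log (cdfOf g (Finv u)) + (1 - u) * Real.log (1 - cdfOf g (Finv u)))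
      (Set.Ioo (0:ℝ) 1)) :
    (∑ i ∈ Finset.Icc 1 n, KL (osDen f n i) (osDen g n i))
      = (n : ℝ) * KL f g
        + (-((n : ℝ) * ((n : ℝ) - 1)) / 2
            - (n : ℝ) * ((n : ℝ) - 1) *
              ∫ u in Set.Ioo (0:ℝ) 1,
                (u * Real.log (cdfOf g (Finv u))
                  + (1 - u) * Real.log (1 - cdfOf g (Finv u)))) :=
  KL_RSS_RSS_decomposition_general n f g S hf_cont hf_nonneg hf_int hg_nonneg hg_int hfS hgS hF_mono
    Finv hFinv_mem hFinv hfg hfgi
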